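/- Let G be a finite group, A and B subgroups of G with A ≠ B, A ≅ B ≅ AGL₂(3), G = ⟨A, B⟩, and S a Sylow 3-subgroup of A ∩ B such that N_G(Z(S)) ≤ A. Then S is a Sylow 3-subgroup of A, of B, and of G. -/

import Mathlib

abbrev GL23 := Matrix.GeneralLinearGroup (Fin 2) (ZMod 3)
abbrev V23 := Multiplicative (Fin 2 → ZMod 3)

def glAddAut (g : GL23) : (Fin 2 → ZMod 3) ≃+ (Fin 2 → ZMod 3) where
  toFun v := (g : Matrix (Fin 2) (Fin 2) (ZMod 3)).mulVec v
  invFun v := ((g⁻¹ : GL23) : Matrix (Fin 2) (Fin 2) (ZMod 3)).mulVec v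
  left_inv v := by
    have hd : IsUnit ((g : Matrix (Fin 2) (Fin 2) (ZMod 3)).det) :=
      (Matrix.isUnit_iff_isUnit_det _).mp g.isUnit
    simp only [Matrix.mulVec_mulVec, Units.inv_mul, Matrix.one_mulVec]
  right_inv v := by
    have hd : IsUnit ((g : Matrix (Fin 2) (Fin 2) (ZMod 3)).det) :=
      (Matrix.isUnit_iff_isUnit_det _).mp g.isUnit
    simp only [Matrix.mulVec_mulVec, Units.mul_inv, Matrix.one_mulVec]
  map_add' x y := Matrix.mulVec_add _ x y

def aglPhi : GL23 →* MulAut V23 where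
  toFun g := AddEquiv.toMultiplicative (glAddAut g)
  map_one' := by
    ext v
    simp [glAddAut, AddEquiv.toMultiplicative]
  map_mul' g h := by
    ext v
    simp [glAddAut, AddEquiv.toMultiplicative, Matrix.mulVec_mulVec]
    rename_i i
    fin_cases i <;> simp [Matrix.mul_apply, Fin.sum_univ_two] <;> ring

/-- The affine group `AGL₂(3) = (F₃)² ⋊ GL₂(3)`. -/
def AGL23 := SemidirectProduct V23 GL23 aglPhi

instance : Group AGL23 := SemidirectProduct.instGroup


/-- `S` is a Sylow 3-subgroup of the subgroup `K`: `S` is a 3-subgroup of `K`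
maximal among 3-subgroups of `K`. -/
def IsSylow3In {G : Type*} [Group G] (S K : Subgroup G) : Prop :=
  S ≤ K ∧ IsPGroup 3 ↥S ∧
    ∀ T : Subgroup G, IsPGroup 3 ↥T → T ≤ K → S ≤ T → T = S

/-!
Since `Z(S)` is characteristic in `S`, `N_G(S) ≤ N_G(Z(S)) ≤ A`. In a nilpotent group every
proper subgroup is properly contained in its normalizer, so if `S` were properly contained in a
3-subgroup `T` of `B`, then `S < N_T(S) ≤ A ∩ B`, against the maximality of `S` in `A ∩ B`.
Hence `S` is Sylow in `B`; as `|A| = |B|`, it has the order of a Sylow 3-subgroup of `A`, and the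
same argument with `A` and `G` in place of `A ∩ B` and `B` shows that `S` is Sylow in `G`.
-/

namespace Subgroup

variable {G : Type*} [Group G]

theorem normalizer_le_normalizer_map_subtype_of_characteristic {S : Subgroup G} (K : Subgroup S)
    [hK : K.Characteristic] :
    normalizer (S : Set G) ≤ normalizer (K.map S.subtype : Set G) := by
  intro g hg
  rw [mem_normalizer_iff_map_conj_eq] at hg ⊢
  let φ : S ≃* S := ((MulAut.conj g).subgroupMap S).trans (MulEquiv.subgroupCongr hg)
  have hφ : S.subtype.comp φ.toMonoidHom = (MulAut.conj g : G →* G).comp S.subtype := rfl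
  rw [map_map, ← hφ, ← map_map, characteristic_iff_map_eq.mp hK φ]

theorem lt_inf_normalizer_of_isNilpotent {S T : Subgroup G} [Group.IsNilpotent T] (h : S < T) :
    S < T ⊓ normalizer (S : Set G) := by
  have hproper : S.subgroupOf T < ⊤ := by
    rw [lt_top_iff_ne_top, Ne, subgroupOf_eq_top]
    exact h.not_ge
  have hgrow := Group.normalizerCondition_of_isNilpotent _ hproper
  rw [← subgroupOf_normalizer_eq h.le, ← map_subtype_lt_map_subtype, subgroupOf_map_subtype,
    subgroupOf_map_subtype, inf_eq_left.mpr h.le, inf_comm] at hgrow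
  exact hgrow

end Subgroup

section IsSylow3In

variable {G : Type*} [Group G] [Finite G]

open Subgroup

theorem isSylow3In_iff_card_eq {S K : Subgroup G} :
    IsSylow3In S K ↔ S ≤ K ∧ Nat.card S = 3 ^ (Nat.card K).factorization 3 := by
  have : Fact (Nat.Prime 3) := ⟨Nat.prime_three⟩
  constructor
  · rintro ⟨hSK, hS, hmax⟩
    obtain ⟨Q, hQ⟩ := (hS.comap_subtype (K := K)).exists_le_sylow
    have hQS : (Q : Subgroup K).map K.subtype = S :=
      hmax _ (Q.isPGroup'.map _) (map_subtype_le _)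
        ((map_subgroupOf_eq_of_le hSK).ge.trans (map_mono hQ))
    refine ⟨hSK, ?_⟩
    rw [← hQS, card_map_of_injective K.subtype_injective, Q.card_eq_multiplicity]
  · rintro ⟨hSK, hcard⟩
    let P : Sylow 3 K := Sylow.ofCard (S.subgroupOf K) <| by
      rwa [Nat.card_congr (subgroupOfEquivOfLe hSK).toEquiv]
    refine ⟨hSK, .of_card hcard, fun T hT hTK hST => ?_⟩
    have hTP : T.subgroupOf K = S.subgroupOf K :=
      P.is_maximal' hT.comap_subtype (subgroupOf_mono K hST)
    rwa [subgroupOf_inj, inf_eq_left.mpr hTK, inf_eq_left.mpr hSK] at hTP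

theorem IsSylow3In.of_inf_of_inf_normalizer_le {S H K : Subgroup G} (hS : IsSylow3In S (H ⊓ K))
    (hN : H ⊓ normalizer (S : Set G) ≤ K) : IsSylow3In S H := by
  obtain ⟨hSHK, hS3, hmax⟩ := hS
  refine ⟨hSHK.trans inf_le_left, hS3, fun T hT hTH hST => ?_⟩
  by_contra hne
  have : Fact (Nat.Prime 3) := ⟨Nat.prime_three⟩
  have : Group.IsNilpotent T := hT.isNilpotent
  have hlt := lt_inf_normalizer_of_isNilpotent (hST.lt_of_ne (Ne.symm hne))
  have hle : T ⊓ normalizer (S : Set G) ≤ H ⊓ K :=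
    le_inf (inf_le_left.trans hTH) ((inf_le_inf_right _ hTH).trans hN)
  exact hlt.ne (hmax _ (hT.to_le inf_le_left) hle hlt.le).symm

end IsSylow3In

theorem stmt13_general {G : Type*} [Group G] [Finite G] (A B S : Subgroup G)
    (hA : Nonempty (↥A ≃* AGL23)) (hB : Nonempty (↥B ≃* AGL23))
    (hS : IsSylow3In S (A ⊓ B))
    (hNZ : Subgroup.normalizer (Subgroup.map S.subtype (Subgroup.center ↥S) : Set G) ≤ A) :
    IsSylow3In S A ∧ IsSylow3In S B ∧ IsSylow3In S ⊤ := by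
  have hN : Subgroup.normalizer (S : Set G) ≤ A :=
    (Subgroup.normalizer_le_normalizer_map_subtype_of_characteristic _).trans hNZ
  have hSB : IsSylow3In S B :=
    (inf_comm A B ▸ hS).of_inf_of_inf_normalizer_le (inf_le_right.trans hN)
  have hSA : IsSylow3In S A := by
    have hcard : Nat.card A = Nat.card B := Nat.card_congr (hA.some.trans hB.some.symm).toEquiv
    rw [isSylow3In_iff_card_eq] at hSB ⊢
    exact ⟨hS.1.trans inf_le_left, hcard ▸ hSB.2⟩
  have hSG : IsSylow3In S ⊤ :=
    (top_inf_eq A ▸ hSA).of_inf_of_inf_normalizer_le (inf_le_right.trans hN)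
  exact ⟨hSA, hSB, hSG⟩

/-- Theorem A setup: if `G = ⟨A,B⟩` is finite, `A ≠ B`, `A ≅ B ≅ AGL₂(3)`,
`S ∈ Syl₃(A ∩ B)` and `N_G(Z(S)) ≤ A`, then `S` is a Sylow 3-subgroup of `A`,
of `B`, and of `G`. -/
theorem stmt13 {G : Type*} [Group G] [Finite G] (A B S : Subgroup G)
    (hAB : A ≠ B)
    (hA : Nonempty (↥A ≃* AGL23)) (hB : Nonempty (↥B ≃* AGL23))
    (hgen : A ⊔ B = ⊤)
    (hS : IsSylow3In S (A ⊓ B))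
    (hNZ : Subgroup.normalizer (Subgroup.map S.subtype (Subgroup.center ↥S) : Set G) ≤ A) :
    IsSylow3In S A ∧ IsSylow3In S B ∧ IsSylow3In S ⊤ :=
  stmt13_general A B S hA hB hS hNZ
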